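/- Let O⁺ be a finite set of user–item pairs with unit vectors v_u, v_j ∈ ℝ^d, each user u appearing in O⁺ having a finite nonempty negative set N_u, and τ > 0. Then for any choice of real numbers A_ui, ∑_{(u,i)∈O⁺} log( exp(A_ui) + ∑_{j∈N_u} exp(⟨v_u, v_j⟩/τ) ) ≥ ∑_{(u,i)∈O⁺} [ log|N_u| + 1/τ − (1/(2τ|N_u|)) ∑_{j∈N_u} ‖v_u − v_j‖² ]; that is, the log-partition term of the BC loss is bounded below, up to explicit constants, by the negative of the average squared distances between each user and its negative items (the dispersion term). -/

import Mathlib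

/-!
For unit vectors `⟪u, v⟫ = 1 - ‖u - v‖² / 2`, so every negative logit is `1/τ` minus a multiple
of a squared distance. Dropping the positive term and applying Jensen's inequality to `exp`
(log-sum-exp over `n` terms is at least `log n` plus their mean) gives the bound summand by summand.
-/

open Real BigOperators

lemma Real.log_card_add_mean_le_log_sum_exp {ι : Type*} {s : Finset ι} (hs : s.Nonempty)
    (f : ι → ℝ) :
    Real.log s.card + (∑ i ∈ s, f i) / s.card ≤ Real.log (∑ i ∈ s, Real.exp (f i)) := by
  have hcard : (0 : ℝ) < s.card := by exact_mod_cast hs.card_pos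
  have hjensen : Real.exp ((s.card : ℝ)⁻¹ * ∑ i ∈ s, f i) ≤
      (s.card : ℝ)⁻¹ * ∑ i ∈ s, Real.exp (f i) := by
    have h := convexOn_exp.map_sum_le (w := fun _ : ι => (s.card : ℝ)⁻¹) (p := f) (t := s)
      (fun _ _ => by positivity) (by simp [hcard.ne']) (fun _ _ => Set.mem_univ _)
    simpa only [smul_eq_mul, ← Finset.mul_sum] using h
  rw [← Real.log_exp ((∑ i ∈ s, f i) / s.card), ← Real.log_mul hcard.ne' (Real.exp_pos _).ne']
  refine Real.log_le_log (by positivity) ?_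
  rw [div_eq_inv_mul]
  calc (s.card : ℝ) * Real.exp ((s.card : ℝ)⁻¹ * ∑ i ∈ s, f i)
      ≤ s.card * ((s.card : ℝ)⁻¹ * ∑ i ∈ s, Real.exp (f i)) := by gcongr
    _ = ∑ i ∈ s, Real.exp (f i) := by field_simp

lemma real_inner_eq_one_sub_norm_sub_sq_div_two {E : Type*} [NormedAddCommGroup E]
    [InnerProductSpace ℝ E] {x y : E} (hx : ‖x‖ = 1) (hy : ‖y‖ = 1) :
    inner ℝ x y = 1 - ‖x - y‖ ^ 2 / 2 := by
  rw [norm_sub_sq_real, hx, hy]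
  ring

lemma log_exp_add_sum_exp_inner_div_ge {E ι : Type*} [NormedAddCommGroup E]
    [InnerProductSpace ℝ E] {v : E} {w : ι → E} (hv : ‖v‖ = 1) (hw : ∀ j, ‖w j‖ = 1)
    {s : Finset ι} (hs : s.Nonempty) (τ a : ℝ) :
    Real.log s.card + 1 / τ - 1 / (2 * τ * s.card) * ∑ j ∈ s, ‖v - w j‖ ^ 2 ≤
      Real.log (Real.exp a + ∑ j ∈ s, Real.exp (inner ℝ v (w j) / τ)) := by
  have hcard : (s.card : ℝ) ≠ 0 := by exact_mod_cast hs.card_pos.ne'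
  have hmean : 1 / τ - 1 / (2 * τ * s.card) * ∑ j ∈ s, ‖v - w j‖ ^ 2 =
      (∑ j ∈ s, inner ℝ v (w j) / τ) / s.card := by
    simp only [real_inner_eq_one_sub_norm_sub_sq_div_two hv (hw _), sub_div,
      Finset.sum_sub_distrib, Finset.sum_const, nsmul_eq_mul, ← Finset.sum_div]
    field_simp
  calc Real.log s.card + 1 / τ - 1 / (2 * τ * s.card) * ∑ j ∈ s, ‖v - w j‖ ^ 2
      = Real.log s.card + (∑ j ∈ s, inner ℝ v (w j) / τ) / s.card := by
        rw [add_sub_assoc, hmean]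
    _ ≤ Real.log (∑ j ∈ s, Real.exp (inner ℝ v (w j) / τ)) :=
        Real.log_card_add_mean_le_log_sum_exp hs _
    _ ≤ Real.log (Real.exp a + ∑ j ∈ s, Real.exp (inner ℝ v (w j) / τ)) :=
        Real.log_le_log (Finset.sum_pos (fun _ _ => Real.exp_pos _) hs)
          (le_add_of_nonneg_left (Real.exp_pos a).le)

theorem log_partition_lower_bound_general
    {U I : Type*} (d : ℕ)
    (vU : U → EuclideanSpace ℝ (Fin d)) (vI : I → EuclideanSpace ℝ (Fin d))
    (hU : ∀ u, ‖vU u‖ = 1) (hI : ∀ i, ‖vI i‖ = 1)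
    (Opos : Finset (U × I))
    (N : U → Finset I) (hN : ∀ p ∈ Opos, (N p.1).Nonempty)
    (τ : ℝ)
    (A : U → I → ℝ) :
    ∑ p ∈ Opos, Real.log
      (Real.exp (A p.1 p.2) +
        ∑ j ∈ N p.1, Real.exp ((inner ℝ (vU p.1) (vI j) : ℝ) / τ)) ≥
    ∑ p ∈ Opos,
      (Real.log ((N p.1).card) + 1 / τ -
        (1 / (2 * τ * (N p.1).card)) * ∑ j ∈ N p.1, ‖vU p.1 - vI j‖ ^ 2) :=
  Finset.sum_le_sum fun p hp =>
    log_exp_add_sum_exp_inner_div_ge (hU p.1) hI (hN p hp) τ (A p.1 p.2)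

/-- The log-partition term of the BC loss is bounded below, up to
explicit constants, by the negative of the average squared distances between each
user and its negative items (the dispersion term). -/
theorem log_partition_lower_bound
    {U I : Type*} (d : ℕ)
    (vU : U → EuclideanSpace ℝ (Fin d)) (vI : I → EuclideanSpace ℝ (Fin d))
    (hU : ∀ u, ‖vU u‖ = 1) (hI : ∀ i, ‖vI i‖ = 1)
    (Opos : Finset (U × I))
    (N : U → Finset I) (hN : ∀ p ∈ Opos, (N p.1).Nonempty)
    (τ : ℝ) (hτ : 0 < τ)
    (A : U → I → ℝ) :
    ∑ p ∈ Opos, Real.log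
      (Real.exp (A p.1 p.2) +
        ∑ j ∈ N p.1, Real.exp ((inner ℝ (vU p.1) (vI j) : ℝ) / τ)) ≥
    ∑ p ∈ Opos,
      (Real.log ((N p.1).card) + 1 / τ -
        (1 / (2 * τ * (N p.1).card)) * ∑ j ∈ N p.1, ‖vU p.1 - vI j‖ ^ 2) :=
  log_partition_lower_bound_general d vU vI hU hI Opos N hN τ A
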